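/- arXiv:1312.5866 — 5 statements merged into one kernel-verified Lean document; each statement's English description precedes it below -/
import Mathlib

section
/- Let ψ : [0,R] → ℝ be continuous, positive on (0,R), and let φ(r) := ∫₀^r ψ(s) ds. Suppose S := sup_{(0,R)} φ/ψ < ∞. Then for every C¹ function φ̃ : [0,R] → ℝ with φ̃(0)=φ̃(R)=0, one has ∫₀^R φ̃'(r)² ψ(r) dr ≥ (1/(4S²)) ∫₀^R φ̃(r)² ψ(r) dr. -/
/-!
Integrate `(v² φ)' = 2 v v' φ + v² ψ` over `[0, R]`: the boundary terms vanish, so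
`∫ v² ψ = -∫ 2 v v' φ`. Since `0 ≤ φ ≤ S ψ`, the pointwise AM–GM bound
`-2 v v' φ ≤ φ (2 S v'² + v² / (2 S)) ≤ 2 S² v'² ψ + v² ψ / 2` gives
`∫ v² ψ ≤ 2 S² ∫ v'² ψ + ½ ∫ v² ψ`, i.e. `∫ v² ψ ≤ 4 S² ∫ v'² ψ`.
-/

open Set intervalIntegral
open MeasureTheory (volume)

theorem hasDerivAt_integral_of_continuousOn_Icc {f : ℝ → ℝ} {a b x : ℝ}
    (hf : ContinuousOn f (Icc a b)) (hx : x ∈ Ioo a b) :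
    HasDerivAt (fun r => ∫ t in a..r, f t) (f x) x := by
  have hIcc : Icc a b ∈ nhds x := Icc_mem_nhds hx.1 hx.2
  refine integral_hasDerivAt_right ?_ ?_ (hf.continuousAt hIcc)
  · exact (hf.mono (Icc_subset_Icc le_rfl hx.2.le)).intervalIntegrable_of_Icc hx.1.le
  · exact ⟨Ioo a b, Ioo_mem_nhds hx.1 hx.2,
      (hf.mono Ioo_subset_Icc_self).aestronglyMeasurable measurableSet_Ioo⟩

theorem hasDerivAt_derivWithin_Icc {f : ℝ → ℝ} {a b x : ℝ}
    (hf : DifferentiableOn ℝ f (Icc a b)) (hx : x ∈ Ioo a b) :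
    HasDerivAt f (derivWithin f (Icc a b) x) x := by
  have hIcc : Icc a b ∈ nhds x := Icc_mem_nhds hx.1 hx.2
  rw [derivWithin_of_mem_nhds hIcc]
  exact hf.hasDerivAt hIcc

theorem neg_two_mul_mul_mul_le_of_le_mul {S p q φ ψ : ℝ} (hS : 0 < S) (hφ₀ : 0 ≤ φ)
    (hφS : φ ≤ S * ψ) :
    -(2 * p * q * φ) ≤ 2 * S ^ 2 * (q ^ 2 * ψ) + (p ^ 2 * ψ) / 2 := by
  have hamgm : -(2 * p * q) ≤ 2 * S * q ^ 2 + p ^ 2 / (2 * S) := by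
    rw [← sub_nonneg]
    have hsq : 2 * S * q ^ 2 + p ^ 2 / (2 * S) - -(2 * p * q) = (2 * S * q + p) ^ 2 / (2 * S) := by
      field_simp
      ring
    rw [hsq]
    positivity
  calc -(2 * p * q * φ) = -(2 * p * q) * φ := by ring
    _ ≤ (2 * S * q ^ 2 + p ^ 2 / (2 * S)) * φ := mul_le_mul_of_nonneg_right hamgm hφ₀
    _ ≤ (2 * S * q ^ 2 + p ^ 2 / (2 * S)) * (S * ψ) :=
        mul_le_mul_of_nonneg_left hφS (by positivity)
    _ = 2 * S ^ 2 * (q ^ 2 * ψ) + (p ^ 2 * ψ) / 2 := by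
        field_simp

section IntegrationByParts

variable {a b : ℝ} {v v' ψ φ : ℝ → ℝ}

theorem integral_sq_mul_eq_neg_integral (hab : a ≤ b)
    (hv : ContinuousOn v (Icc a b)) (hv' : ContinuousOn v' (Icc a b))
    (hψ : ContinuousOn ψ (Icc a b)) (hφ : ContinuousOn φ (Icc a b))
    (hvd : ∀ x ∈ Ioo a b, HasDerivAt v (v' x) x) (hφd : ∀ x ∈ Ioo a b, HasDerivAt φ (ψ x) x)
    (ha : v a = 0) (hb : v b = 0) :
    ∫ x in a..b, v x ^ 2 * ψ x = -∫ x in a..b, 2 * v x * v' x * φ x := by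
  have hI₁ : IntervalIntegrable (fun x => 2 * v x * v' x * φ x) volume a b :=
    (((continuousOn_const.mul hv).mul hv').mul hφ).intervalIntegrable_of_Icc hab
  have hI₂ : IntervalIntegrable (fun x => v x ^ 2 * ψ x) volume a b :=
    ((hv.pow 2).mul hψ).intervalIntegrable_of_Icc hab
  have hderiv : ∀ x ∈ Ioo a b,
      HasDerivAt (fun x => v x ^ 2 * φ x) (2 * v x * v' x * φ x + v x ^ 2 * ψ x) x := by
    intro x hx
    refine (((hvd x hx).fun_pow 2).fun_mul (hφd x hx)).congr_deriv ?_
    push_cast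
    ring
  have hFTC := integral_eq_sub_of_hasDerivAt_of_le hab ((hv.pow 2).mul hφ) hderiv (hI₁.add hI₂)
  rw [integral_add hI₁ hI₂] at hFTC
  simp only [Pi.mul_apply, Pi.pow_apply, ha, hb] at hFTC
  linarith

theorem integral_sq_mul_le_of_le_mul {S : ℝ} (hab : a ≤ b) (hS : 0 < S)
    (hv : ContinuousOn v (Icc a b)) (hv' : ContinuousOn v' (Icc a b))
    (hψ : ContinuousOn ψ (Icc a b)) (hφ : ContinuousOn φ (Icc a b))
    (hvd : ∀ x ∈ Ioo a b, HasDerivAt v (v' x) x) (hφd : ∀ x ∈ Ioo a b, HasDerivAt φ (ψ x) x)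
    (hφ₀ : ∀ x ∈ Ioo a b, 0 ≤ φ x) (hφS : ∀ x ∈ Ioo a b, φ x ≤ S * ψ x)
    (ha : v a = 0) (hb : v b = 0) :
    ∫ x in a..b, v x ^ 2 * ψ x ≤ 4 * S ^ 2 * ∫ x in a..b, v' x ^ 2 * ψ x := by
  have hI₁ : IntervalIntegrable (fun x => v x ^ 2 * ψ x) volume a b :=
    ((hv.pow 2).mul hψ).intervalIntegrable_of_Icc hab
  have hI₂ : IntervalIntegrable (fun x => v' x ^ 2 * ψ x) volume a b :=
    ((hv'.pow 2).mul hψ).intervalIntegrable_of_Icc hab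
  have hIₗ : IntervalIntegrable (fun x => -(2 * v x * v' x * φ x)) volume a b :=
    (((continuousOn_const.mul hv).mul hv').mul hφ).neg.intervalIntegrable_of_Icc hab
  have key : ∫ x in a..b, v x ^ 2 * ψ x
      ≤ 2 * S ^ 2 * (∫ x in a..b, v' x ^ 2 * ψ x) + (∫ x in a..b, v x ^ 2 * ψ x) / 2 := by
    calc ∫ x in a..b, v x ^ 2 * ψ x = ∫ x in a..b, -(2 * v x * v' x * φ x) := by
          rw [integral_neg, integral_sq_mul_eq_neg_integral hab hv hv' hψ hφ hvd hφd ha hb]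
      _ ≤ ∫ x in a..b, (2 * S ^ 2 * (v' x ^ 2 * ψ x) + (v x ^ 2 * ψ x) / 2) :=
          integral_mono_on_of_le_Ioo hab hIₗ ((hI₂.const_mul _).add (hI₁.div_const _))
            fun x hx => neg_two_mul_mul_mul_le_of_le_mul hS (hφ₀ x hx) (hφS x hx)
      _ = _ := by
          rw [integral_add (hI₂.const_mul _) (hI₁.div_const _), integral_const_mul,
            integral_div]
  linarith

end IntegrationByParts

/-- Weighted Poincaré inequality: if `ψ` is continuous on `[0,R]`, positive on `(0,R)`,
`φ(r) = ∫₀^r ψ`, and `φ/ψ ≤ S` on `(0,R)` with `S > 0`, then for every `C¹` function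
`v` on `[0,R]` vanishing at both endpoints,
`∫₀^R v'² ψ ≥ (1/(4S²)) ∫₀^R v² ψ`. -/
theorem stmt_2 (R : ℝ) (hR : 0 < R) (ψ : ℝ → ℝ)
    (hψC : ContinuousOn ψ (Icc 0 R))
    (hψpos : ∀ r ∈ Ioo 0 R, 0 < ψ r)
    (S : ℝ) (hS : 0 < S)
    (hSsup : ∀ r ∈ Ioo 0 R, (∫ s in (0:ℝ)..r, ψ s) / ψ r ≤ S)
    (v : ℝ → ℝ) (hv : ContDiffOn ℝ 1 v (Icc 0 R))
    (hv0 : v 0 = 0) (hvR : v R = 0) :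
    (∫ r in (0:ℝ)..R, (deriv v r) ^ 2 * ψ r)
      ≥ (1 / (4 * S ^ 2)) * ∫ r in (0:ℝ)..R, (v r) ^ 2 * ψ r := by
  set v' := derivWithin v (Icc 0 R)
  have hv'd : ∀ r ∈ Ioo 0 R, HasDerivAt v (v' r) r :=
    fun r hr => hasDerivAt_derivWithin_Icc (hv.differentiableOn one_ne_zero) hr
  have hφ : ContinuousOn (fun r => ∫ s in (0:ℝ)..r, ψ s) (Icc 0 R) := by
    simpa only [uIcc_of_le hR.le] using
      continuousOn_primitive_interval (a := 0) (b := R) (μ := volume)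
        (by rw [uIcc_of_le hR.le]; exact hψC.integrableOn_Icc)
  have hφ₀ : ∀ r ∈ Ioo 0 R, 0 ≤ ∫ s in (0:ℝ)..r, ψ s := fun r hr =>
    (intervalIntegral_pos_of_pos_on
      ((hψC.mono (Icc_subset_Icc le_rfl hr.2.le)).intervalIntegrable_of_Icc hr.1.le)
      (fun s hs => hψpos s ⟨hs.1, hs.2.trans hr.2⟩) hr.1).le
  have hφS : ∀ r ∈ Ioo 0 R, (∫ s in (0:ℝ)..r, ψ s) ≤ S * ψ r := fun r hr =>
    (div_le_iff₀ (hψpos r hr)).mp (hSsup r hr)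
  have hderiv_eq : ∫ r in (0:ℝ)..R, deriv v r ^ 2 * ψ r = ∫ r in (0:ℝ)..R, v' r ^ 2 * ψ r :=
    integral_congr_Ioo_of_le hR.le fun r hr => by rw [(hv'd r hr).deriv]
  have hpoincare := integral_sq_mul_le_of_le_mul hR.le hS hv.continuousOn
    (hv.continuousOn_derivWithin (uniqueDiffOn_Icc hR) le_rfl) hψC hφ hv'd
    (fun r hr => hasDerivAt_integral_of_continuousOn_Icc hψC hr) hφ₀ hφS hv0 hvR
  rw [hderiv_eq, ge_iff_le, one_div, inv_mul_le_iff₀ (by positivity)]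
  exact hpoincare
end

section
/- Let n ≥ 3, 0 < R < π/2, and ψ = sin on (0,R). For every C¹ function ξ : [0,R] → ℝ with ξ(R)=0 and ξ·ψ^{(n-2)/2} extending continuously by 0 at r=0, one has ∫₀^R sin(r)^{n-1} ξ'(r)² dr ≥ ((n-2)²/4) ∫₀^R sin(r)^{n-3} ξ(r)² dr + H ∫₀^R sin(r)^{n-1} ξ(r)² dr, where H = (1/4)( sin²R/(1 - cos R)² - n(n-2) ). -/
open Set Filter Real MeasureTheory Topology

/-!
If `P` solves the Riccati inequality `P² ≤ w (P' - V)` with `w > 0`, then completing the square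
gives pointwise `V ξ² ≤ w ξ'² + (P ξ²)'`, and integrating yields `∫ V ξ² ≤ ∫ w ξ'²` plus boundary
terms. On the sphere, with `n = m + 3`, `A = (n - 2)/2`, `w = sin^{n-1}`,
`V = sin^{n-3} (A² + (β/2 - A² - A) sin²)` and `P = sin^{n-2} (A cos + β (1 - cos))`, the Riccati
inequality is `sin^{2n-4} · β (1 - cos) ((1 + cos)/2 - β (1 - cos)) ≥ 0`, which holds on `(0, R)`
for every `0 ≤ β ≤ (1 + cos R)/(2 (1 - cos R)) = sin² R/(2 (1 - cos R)²)`; the largest such `β`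
turns `β/2 - A² - A` into `H`.
-/

theorem quadratic_le_of_riccati {w V P P' x d : ℝ} (hw : 0 < w) (h : P ^ 2 ≤ w * (P' - V)) :
    V * x ^ 2 ≤ w * d ^ 2 + (P' * x ^ 2 + P * (2 * x * d)) := by
  have hsq : w * (w * d ^ 2 + (P' * x ^ 2 + P * (2 * x * d)) - V * x ^ 2)
      = (w * d + P * x) ^ 2 + (w * (P' - V) - P ^ 2) * x ^ 2 := by ring
  rw [← sub_nonneg, ← mul_nonneg_iff_of_pos_left hw, hsq]
  exact add_nonneg (sq_nonneg _) (mul_nonneg (sub_nonneg.mpr h) (sq_nonneg x))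

section Riccati

variable {a b : ℝ} {ξ ξ' P P' : ℝ → ℝ}

theorem integral_hasDerivAt_mul_sq_eq_sub (hab : a ≤ b) (hξ : ContinuousOn ξ (Icc a b))
    (hξ' : ContinuousOn ξ' (Icc a b)) (hξderiv : ∀ r ∈ Ioo a b, HasDerivAt ξ (ξ' r) r)
    (hP : ContinuousOn P (Icc a b)) (hP' : ContinuousOn P' (Icc a b))
    (hPderiv : ∀ r ∈ Ioo a b, HasDerivAt P (P' r) r) :
    ∫ r in a..b, (P' r * ξ r ^ 2 + P r * (2 * ξ r * ξ' r)) = P b * ξ b ^ 2 - P a * ξ a ^ 2 := by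
  refine intervalIntegral.integral_eq_sub_of_hasDerivAt_of_le hab (hP.mul (hξ.pow 2))
    (fun r hr => ?_) (ContinuousOn.intervalIntegrable_of_Icc hab ?_)
  · simpa using (hPderiv r hr).mul ((hξderiv r hr).pow 2)
  · exact (hP'.mul (hξ.pow 2)).add (hP.mul ((continuousOn_const.mul hξ).mul hξ'))

theorem integral_mul_sq_le_of_riccati {w V : ℝ → ℝ} (hab : a ≤ b)
    (hξ : ContinuousOn ξ (Icc a b)) (hξ' : ContinuousOn ξ' (Icc a b))
    (hξderiv : ∀ r ∈ Ioo a b, HasDerivAt ξ (ξ' r) r)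
    (hP : ContinuousOn P (Icc a b)) (hP' : ContinuousOn P' (Icc a b))
    (hPderiv : ∀ r ∈ Ioo a b, HasDerivAt P (P' r) r)
    (hw : ContinuousOn w (Icc a b)) (hV : ContinuousOn V (Icc a b))
    (hw_pos : ∀ r ∈ Ioo a b, 0 < w r) (hriccati : ∀ r ∈ Ioo a b, P r ^ 2 ≤ w r * (P' r - V r)) :
    ∫ r in a..b, V r * ξ r ^ 2
      ≤ (∫ r in a..b, w r * ξ' r ^ 2) + (P b * ξ b ^ 2 - P a * ξ a ^ 2) := by
  have hint : ∀ {f : ℝ → ℝ}, ContinuousOn f (Icc a b) → IntervalIntegrable f volume a b :=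
    ContinuousOn.intervalIntegrable_of_Icc hab
  have hgrad : IntervalIntegrable (fun r => w r * ξ' r ^ 2) volume a b :=
    hint (hw.mul (hξ'.pow 2))
  have hflux : IntervalIntegrable (fun r => P' r * ξ r ^ 2 + P r * (2 * ξ r * ξ' r)) volume a b :=
    hint ((hP'.mul (hξ.pow 2)).add (hP.mul ((continuousOn_const.mul hξ).mul hξ')))
  rw [← integral_hasDerivAt_mul_sq_eq_sub hab hξ hξ' hξderiv hP hP' hPderiv,
    ← intervalIntegral.integral_add hgrad hflux]
  exact intervalIntegral.integral_mono_on_of_le_Ioo hab (hint (hV.mul (hξ.pow 2)))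
    (hgrad.add hflux) fun r hr => quadratic_le_of_riccati (hw_pos r hr) (hriccati r hr)

theorem integral_mul_sq_deriv_le_of_riccati {w V : ℝ → ℝ} {ξ : ℝ → ℝ} (hab : a < b)
    (hξ : ContDiffOn ℝ 1 ξ (Icc a b))
    (hP : ContinuousOn P (Icc a b)) (hP' : ContinuousOn P' (Icc a b))
    (hPderiv : ∀ r ∈ Ioo a b, HasDerivAt P (P' r) r)
    (hw : ContinuousOn w (Icc a b)) (hV : ContinuousOn V (Icc a b))
    (hw_pos : ∀ r ∈ Ioo a b, 0 < w r) (hriccati : ∀ r ∈ Ioo a b, P r ^ 2 ≤ w r * (P' r - V r)) :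
    ∫ r in a..b, V r * ξ r ^ 2
      ≤ (∫ r in a..b, w r * deriv ξ r ^ 2) + (P b * ξ b ^ 2 - P a * ξ a ^ 2) := by
  have hmem : ∀ r ∈ Ioo a b, Icc a b ∈ 𝓝 r := fun r hr => Icc_mem_nhds hr.1 hr.2
  have hderiv_eq : EqOn (deriv ξ) (derivWithin ξ (Icc a b)) (Ioo a b) := fun r hr =>
    (derivWithin_of_mem_nhds (hmem r hr)).symm
  have hξderiv : ∀ r ∈ Ioo a b, HasDerivAt ξ (derivWithin ξ (Icc a b) r) r := fun r hr =>
    hderiv_eq hr ▸ ((hξ.differentiableOn one_ne_zero r (Ioo_subset_Icc_self hr)).differentiableAt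
      (hmem r hr)).hasDerivAt
  have hcongr : ∫ r in a..b, w r * deriv ξ r ^ 2
      = ∫ r in a..b, w r * derivWithin ξ (Icc a b) r ^ 2 :=
    intervalIntegral.integral_congr_Ioo_of_le hab.le fun r hr => by simp only [hderiv_eq hr]
  rw [hcongr]
  exact integral_mul_sq_le_of_riccati hab.le hξ.continuousOn
    (hξ.continuousOn_derivWithin (uniqueDiffOn_Icc hab) le_rfl) hξderiv hP hP' hPderiv hw hV
    hw_pos hriccati

end Riccati

theorem hasDerivAt_sin_pow_succ_mul (m : ℕ) (A β r : ℝ) :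
    HasDerivAt (fun r => sin r ^ (m + 1) * (A * cos r + β * (1 - cos r)))
      (sin r ^ m * (((m : ℝ) + 1) * cos r * (A * cos r + β * (1 - cos r))
        + (β - A) * sin r ^ 2)) r := by
  have h := ((hasDerivAt_sin r).fun_pow (m + 1)).fun_mul (((hasDerivAt_cos r).const_mul A).fun_add
    (((hasDerivAt_const r 1).fun_sub (hasDerivAt_cos r)).const_mul β))
  refine h.congr_deriv ?_
  rw [Nat.add_sub_cancel]
  push_cast
  ring

theorem sin_pow_riccati (m : ℕ) {A β R r : ℝ} (hA : (m : ℝ) + 1 = 2 * A) (hβ : 0 ≤ β)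
    (hβR : β * (1 - cos R) ≤ (1 + cos R) / 2) (hsin : 0 ≤ sin r) (hcos : cos R ≤ cos r) :
    (sin r ^ (m + 1) * (A * cos r + β * (1 - cos r))) ^ 2
      ≤ sin r ^ (m + 2) * (sin r ^ m * (((m : ℝ) + 1) * cos r * (A * cos r + β * (1 - cos r))
          + (β - A) * sin r ^ 2) - (A ^ 2 * sin r ^ m + (β / 2 - A ^ 2 - A) * sin r ^ (m + 2))) := by
  have hβr : β * (1 - cos r) ≤ (1 + cos r) / 2 :=
    (mul_le_mul_of_nonneg_left (by linarith) hβ).trans (hβR.trans (by linarith))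
  have hgap : 2 * A * cos r * (A * cos r + β * (1 - cos r)) + (β - A) * sin r ^ 2
        - (A ^ 2 + (β / 2 - A ^ 2 - A) * sin r ^ 2) - (A * cos r + β * (1 - cos r)) ^ 2
      = β * (1 - cos r) * ((1 + cos r) / 2 - β * (1 - cos r)) := by
    linear_combination (β / 2 + A ^ 2) * sin_sq_add_cos_sq r
  have hcore : (A * cos r + β * (1 - cos r)) ^ 2
      ≤ 2 * A * cos r * (A * cos r + β * (1 - cos r)) + (β - A) * sin r ^ 2
        - (A ^ 2 + (β / 2 - A ^ 2 - A) * sin r ^ 2) := by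
    have := mul_nonneg (mul_nonneg hβ (sub_nonneg.mpr (cos_le_one r))) (sub_nonneg.mpr hβr)
    linarith
  calc (sin r ^ (m + 1) * (A * cos r + β * (1 - cos r))) ^ 2
      = sin r ^ (2 * m + 2) * (A * cos r + β * (1 - cos r)) ^ 2 := by ring
    _ ≤ sin r ^ (2 * m + 2) * (2 * A * cos r * (A * cos r + β * (1 - cos r))
          + (β - A) * sin r ^ 2 - (A ^ 2 + (β / 2 - A ^ 2 - A) * sin r ^ 2)) :=
      mul_le_mul_of_nonneg_left hcore (pow_nonneg hsin _)
    _ = _ := by rw [hA]; ring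

theorem integral_sin_pow_mul_sq_le (m : ℕ) {R β : ℝ} (hR : 0 < R) (hRπ : R < π) (hβ : 0 ≤ β)
    (hβR : β * (1 - cos R) ≤ (1 + cos R) / 2) {ξ : ℝ → ℝ} (hξ : ContDiffOn ℝ 1 ξ (Icc 0 R))
    (hξR : ξ R = 0) :
    (((m : ℝ) + 1) / 2) ^ 2 * (∫ r in (0)..R, sin r ^ m * ξ r ^ 2)
      + (β / 2 - (((m : ℝ) + 1) / 2) ^ 2 - ((m : ℝ) + 1) / 2)
        * (∫ r in (0)..R, sin r ^ (m + 2) * ξ r ^ 2)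
      ≤ ∫ r in (0)..R, sin r ^ (m + 2) * deriv ξ r ^ 2 := by
  set A : ℝ := ((m : ℝ) + 1) / 2 with hA
  set H : ℝ := β / 2 - A ^ 2 - A
  have hsin : ∀ r ∈ Ioo 0 R, 0 < sin r := fun r hr =>
    sin_pos_of_pos_of_lt_pi hr.1 (hr.2.trans hRπ)
  have h := integral_mul_sq_deriv_le_of_riccati hR hξ
    (P := fun r => sin r ^ (m + 1) * (A * cos r + β * (1 - cos r)))
    (w := fun r => sin r ^ (m + 2)) (V := fun r => A ^ 2 * sin r ^ m + H * sin r ^ (m + 2))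
    (by fun_prop) (by fun_prop) (fun r _ => hasDerivAt_sin_pow_succ_mul m A β r) (by fun_prop)
    (by fun_prop) (fun r hr => pow_pos (hsin r hr) _) fun r hr =>
      sin_pow_riccati m (by rw [hA]; ring) hβ hβR (hsin r hr).le
        (cos_le_cos_of_nonneg_of_le_pi hr.1.le hRπ.le hr.2.le)
  have hint : ∀ k : ℕ, IntervalIntegrable (fun r => sin r ^ k * ξ r ^ 2) volume 0 R := fun k =>
    ContinuousOn.intervalIntegrable_of_Icc hR.le
      ((continuous_sin.pow k).continuousOn.mul (hξ.continuousOn.pow 2))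
  calc A ^ 2 * (∫ r in (0)..R, sin r ^ m * ξ r ^ 2) + H * (∫ r in (0)..R, sin r ^ (m + 2) * ξ r ^ 2)
      = ∫ r in (0)..R, (A ^ 2 * sin r ^ m + H * sin r ^ (m + 2)) * ξ r ^ 2 := by
        rw [← intervalIntegral.integral_const_mul, ← intervalIntegral.integral_const_mul,
          ← intervalIntegral.integral_add ((hint m).const_mul _) ((hint (m + 2)).const_mul _)]
        exact intervalIntegral.integral_congr fun r _ => by ring
    _ ≤ ∫ r in (0)..R, sin r ^ (m + 2) * deriv ξ r ^ 2 := by simpa [hξR] using h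

theorem stmt_4_general (n : ℕ) (hn : 3 ≤ n) (R : ℝ) (hR : 0 < R) (hR2 : R < Real.pi / 2)
    (ξ : ℝ → ℝ) (hξ : ContDiffOn ℝ 1 ξ (Icc 0 R)) (hξR : ξ R = 0) :
    (∫ r in (0:ℝ)..R, Real.sin r ^ (n - 1) * (deriv ξ r) ^ 2)
      ≥ (((n : ℝ) - 2) ^ 2 / 4) * (∫ r in (0:ℝ)..R, Real.sin r ^ (n - 3) * (ξ r) ^ 2)
        + (1 / 4) * (Real.sin R ^ 2 / (1 - Real.cos R) ^ 2 - (n : ℝ) * ((n : ℝ) - 2))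
          * (∫ r in (0:ℝ)..R, Real.sin r ^ (n - 1) * (ξ r) ^ 2) := by
  obtain ⟨m, rfl⟩ : ∃ m, n = m + 3 := ⟨n - 3, by omega⟩
  have hRπ : R < π := by linarith [pi_pos]
  have hcosR : 1 - cos R ≠ 0 :=
    (sub_pos.mpr (by simpa using cos_lt_cos_of_nonneg_of_le_pi le_rfl hRπ.le hR)).ne'
  have hβR : sin R ^ 2 / (2 * (1 - cos R) ^ 2) * (1 - cos R) = (1 + cos R) / 2 := by
    rw [sin_sq]; field_simp; ring
  have key := integral_sin_pow_mul_sq_le m hR hRπ (by positivity) hβR.le hξ hξR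
  have hA : (((m + 3 : ℕ) : ℝ) - 2) ^ 2 / 4 = (((m : ℝ) + 1) / 2) ^ 2 := by push_cast; ring
  have hH : 1 / 4 * (sin R ^ 2 / (1 - cos R) ^ 2 - ((m + 3 : ℕ) : ℝ) * (((m + 3 : ℕ) : ℝ) - 2))
      = sin R ^ 2 / (2 * (1 - cos R) ^ 2) / 2 - (((m : ℝ) + 1) / 2) ^ 2 - ((m : ℝ) + 1) / 2 := by
    push_cast; field_simp; ring
  rw [ge_iff_le, show m + 3 - 1 = m + 2 from rfl, show m + 3 - 3 = m from rfl, hA, hH]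
  exact key

/-- Improved weighted Hardy inequality on the sphere: for `n ≥ 3`, `0 < R < π/2`, and
any `C¹` function `ξ` on `[0,R]` with `ξ(R) = 0` such that `ξ · sin^{(n-2)/2}` extends
continuously by `0` at `r = 0`,
`∫₀^R sin^{n-1} ξ'² ≥ ((n-2)²/4) ∫₀^R sin^{n-3} ξ² + H ∫₀^R sin^{n-1} ξ²`,
where `H = (1/4)(sin²R/(1 - cos R)² - n(n-2))`. -/
theorem stmt_4 (n : ℕ) (hn : 3 ≤ n) (R : ℝ) (hR : 0 < R) (hR2 : R < Real.pi / 2)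
    (ξ : ℝ → ℝ) (hξ : ContDiffOn ℝ 1 ξ (Icc 0 R)) (hξR : ξ R = 0)
    (hext : Tendsto (fun r => ξ r * Real.sin r ^ (((n : ℝ) - 2) / 2))
      (nhdsWithin 0 (Ioi 0)) (nhds 0)) :
    (∫ r in (0:ℝ)..R, Real.sin r ^ (n - 1) * (deriv ξ r) ^ 2)
      ≥ (((n : ℝ) - 2) ^ 2 / 4) * (∫ r in (0:ℝ)..R, Real.sin r ^ (n - 3) * (ξ r) ^ 2)
        + (1 / 4) * (Real.sin R ^ 2 / (1 - Real.cos R) ^ 2 - (n : ℝ) * ((n : ℝ) - 2))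
          * (∫ r in (0:ℝ)..R, Real.sin r ^ (n - 1) * (ξ r) ^ 2) :=
  stmt_4_general n hn R hR hR2 ξ hξ hξR
end

section
/- Let n ≥ 3 and R > 0. The function u(r) = -2 log( sinh(r)/sinh(R) ) satisfies the radial equation -(sinh(r)^{n-1} u'(r))' = sinh(r)^{n-1} · 2(n-2) · ( e^{u(r)}/sinh(R)² + (n-1)/(n-2) ) for all r ∈ (0,R), and u(R) = 0. -/
/-!
On `(0, R)` we have `u' = -2 coth r`, so the flux is `sinh^{n-1} u' = -2 sinh^{n-2} r cosh r`,
whose derivative is `-2 sinh^{n-3} r ((n-2) + (n-1) sinh² r)` by `cosh² = 1 + sinh²`. Since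
`e^u = sinh² R / sinh² r`, the right-hand side
`sinh^{n-1} · 2(n-2) · (1 / sinh² r + (n-1)/(n-2))` is the same expression.
-/

open Set Filter Topology Real

lemma exp_neg_two_mul_log {x : ℝ} (hx : x ≠ 0) : exp (-2 * log x) = (x ^ 2)⁻¹ := by
  rw [neg_mul, exp_neg, ← Nat.cast_ofNat, ← log_pow, exp_log (pow_two_pos_of_ne_zero hx)]

lemma hasDerivAt_neg_two_mul_log_sinh_div {c x : ℝ} (hc : c ≠ 0) (hx : x ≠ 0) :
    HasDerivAt (fun t => -2 * log (sinh t / c)) (-2 * (cosh x / sinh x)) x := by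
  have hsinh : sinh x ≠ 0 := sinh_ne_zero.mpr hx
  refine ((((hasDerivAt_sinh x).div_const c).log (div_ne_zero hsinh hc)).const_mul
    (-2)).congr_deriv ?_
  field_simp

lemma hasDerivAt_sinh_pow_mul_cosh (k : ℕ) (x : ℝ) :
    HasDerivAt (fun s => sinh s ^ (k + 1) * cosh s)
      (sinh x ^ k * ((k + 1 : ℝ) + (k + 2) * sinh x ^ 2)) x := by
  refine (((hasDerivAt_sinh x).pow (k + 1)).mul (hasDerivAt_cosh x)).congr_deriv ?_
  push_cast [Pi.pow_apply]
  linear_combination ((k : ℝ) + 1) * sinh x ^ k * cosh_sq x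

lemma sinh_pow_mul_deriv_log_sinh_div_eventuallyEq (k : ℕ) {c r : ℝ} (hc : c ≠ 0) (hr : r ≠ 0) :
    (fun s => sinh s ^ (k + 2) * deriv (fun t => -2 * log (sinh t / c)) s)
      =ᶠ[𝓝 r] fun s => -2 * (sinh s ^ (k + 1) * cosh s) := by
  filter_upwards [isOpen_ne.mem_nhds hr] with s hs
  rw [(hasDerivAt_neg_two_mul_log_sinh_div hc hs).deriv]
  field_simp [sinh_ne_zero.mpr hs]
  ring

lemma hasDerivAt_sinh_pow_mul_deriv_log_sinh_div (k : ℕ) {c r : ℝ} (hc : c ≠ 0) (hr : r ≠ 0) :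
    HasDerivAt (fun s => sinh s ^ (k + 2) * deriv (fun t => -2 * log (sinh t / c)) s)
      (-2 * (sinh r ^ k * ((k + 1 : ℝ) + (k + 2) * sinh r ^ 2))) r :=
  ((hasDerivAt_sinh_pow_mul_cosh k r).const_mul (-2)).congr_of_eventuallyEq
    (sinh_pow_mul_deriv_log_sinh_div_eventuallyEq k hc hr)

theorem stmt_7_general (n : ℕ) (hn : 3 ≤ n) (R : ℝ) :
    (∀ r ∈ Ioo 0 R,
      HasDerivAt
        (fun s => Real.sinh s ^ (n - 1) *
          deriv (fun t => -2 * Real.log (Real.sinh t / Real.sinh R)) s)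
        (-(Real.sinh r ^ (n - 1) * (2 * ((n : ℝ) - 2)) *
          (Real.exp (-2 * Real.log (Real.sinh r / Real.sinh R)) / Real.sinh R ^ 2
            + ((n : ℝ) - 1) / ((n : ℝ) - 2)))) r) ∧
    -2 * Real.log (Real.sinh R / Real.sinh R) = 0 := by
  obtain ⟨k, rfl⟩ : ∃ k, n = k + 3 := ⟨n - 3, by omega⟩
  refine ⟨fun r ⟨hr₀, hrR⟩ => ?_, by simp⟩
  have hsr : sinh r ≠ 0 := (sinh_pos_iff.mpr hr₀).ne'
  have hsR : sinh R ≠ 0 := (sinh_pos_iff.mpr (hr₀.trans hrR)).ne'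
  rw [show k + 3 - 1 = k + 2 from rfl]
  convert hasDerivAt_sinh_pow_mul_deriv_log_sinh_div k hsR hr₀.ne' using 1
  rw [exp_neg_two_mul_log (div_ne_zero hsr hsR)]
  push_cast
  have hk : (k : ℝ) + 3 - 2 ≠ 0 := by linarith [k.cast_nonneg (α := ℝ)]
  field_simp
  ring

/-- The explicit singular solution for the exponential nonlinearity in hyperbolic space:
`u(r) = -2 log(sinh r / sinh R)` satisfies
`-(sinh^{n-1} u')' = sinh^{n-1} · 2(n-2) · (e^u/sinh²R + (n-1)/(n-2))` on `(0,R)`,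
together with `u(R) = 0`. -/
theorem stmt_7 (n : ℕ) (hn : 3 ≤ n) (R : ℝ) (hR : 0 < R) :
    (∀ r ∈ Ioo 0 R,
      HasDerivAt
        (fun s => Real.sinh s ^ (n - 1) *
          deriv (fun t => -2 * Real.log (Real.sinh t / Real.sinh R)) s)
        (-(Real.sinh r ^ (n - 1) * (2 * ((n : ℝ) - 2)) *
          (Real.exp (-2 * Real.log (Real.sinh r / Real.sinh R)) / Real.sinh R ^ 2
            + ((n : ℝ) - 1) / ((n : ℝ) - 2)))) r) ∧
    -2 * Real.log (Real.sinh R / Real.sinh R) = 0 :=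
  stmt_7_general n hn R
end

section
/- Let n ≥ 3, R > 0, m > 1 with (m-1)n > 2m, and let λ = (2/(m-1))(n - 2m/(m-1)). Then the function u(r) = sinh(r)^{-2/(m-1)} - sinh(R)^{-2/(m-1)} satisfies -(sinh(r)^{n-1} u'(r))' = sinh(r)^{n-1} λ (u(r) + sinh(R)^{-2/(m-1)}) ( (u(r) + sinh(R)^{-2/(m-1)})^{m-1} + ((m-1)n-(m+1))/((m-1)n-2m) ) for all r ∈ (0,R), and u(R)=0. -/
open Set Real Filter Topology

/-!
With `a = -2/(m-1)` and `S = sinh r`, the flux is `S^(n-1) u' = a cosh r S^(n+a-2)`, whose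
derivative is `a((n+a-1) S^(n+a-1) + (n+a-2) S^(n+a-3))` by `cosh² = 1 + sinh²`. On the other side
`u + sinh(R)^a = S^a` and `(S^a)^(m-1) = S^(-2)`, so the right-hand side is
`-λ (S^(n+a-3) + c S^(n+a-1))` with `c = ((m-1)n-(m+1))/((m-1)n-2m)`. The two agree because `λ = -a(n+a-2)` and `λ c = -a(n+a-1)`.
-/

lemma hasDerivAt_sinh_rpow (a : ℝ) {r : ℝ} (hr : 0 < r) :
    HasDerivAt (fun s => sinh s ^ a) (a * cosh r * sinh r ^ (a - 1)) r := by
  convert (hasDerivAt_sinh r).rpow_const (p := a) (Or.inl (sinh_pos_iff.2 hr).ne') using 1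
  ring

lemma hasDerivAt_cosh_mul_sinh_rpow (b : ℝ) {r : ℝ} (hr : 0 < r) :
    HasDerivAt (fun s => cosh s * sinh s ^ b)
      ((b + 1) * sinh r ^ (b + 1) + b * sinh r ^ (b - 1)) r := by
  have hS := sinh_pos_iff.2 hr
  refine ((hasDerivAt_cosh r).mul (hasDerivAt_sinh_rpow b hr)).congr_deriv ?_
  rw [rpow_add hS, rpow_one, rpow_sub_one hS.ne']
  field_simp
  linear_combination b * cosh_sq r

lemma sinh_pow_mul_deriv_sinh_rpow_sub_eventuallyEq (p : ℕ) (a K : ℝ) {r : ℝ} (hr : 0 < r) :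
    (fun s => sinh s ^ p * deriv (fun s => sinh s ^ a - K) s) =ᶠ[𝓝 r]
      fun s => a * (cosh s * sinh s ^ ((p : ℝ) + a - 1)) := by
  filter_upwards [Ioi_mem_nhds hr] with s hs
  have hS := sinh_pos_iff.2 (show 0 < s from hs)
  rw [((hasDerivAt_sinh_rpow a hs).sub_const K).deriv, ← rpow_natCast,
    show (p : ℝ) + a - 1 = p + (a - 1) by ring, rpow_add hS]
  ring

lemma hasDerivAt_sinh_pow_mul_deriv_sinh_rpow_sub (p : ℕ) (a K : ℝ) {r : ℝ} (hr : 0 < r) :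
    HasDerivAt (fun s => sinh s ^ p * deriv (fun s => sinh s ^ a - K) s)
      (a * ((p + a) * sinh r ^ ((p : ℝ) + a) + (p + a - 1) * sinh r ^ ((p : ℝ) + a - 2))) r := by
  have h := (hasDerivAt_cosh_mul_sinh_rpow ((p : ℝ) + a - 1) hr).const_mul a
  rw [show (p : ℝ) + a - 1 + 1 = p + a by ring, show (p : ℝ) + a - 1 - 1 = p + a - 2 by ring] at h
  exact h.congr_of_eventuallyEq (sinh_pow_mul_deriv_sinh_rpow_sub_eventuallyEq p a K hr)

lemma pow_mul_rpow_mul_rpow_add {x : ℝ} (hx : 0 < x) (p : ℕ) (a q c : ℝ) :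
    x ^ p * (x ^ a * ((x ^ a) ^ q + c)) = x ^ ((p : ℝ) + a + a * q) + c * x ^ ((p : ℝ) + a) := by
  rw [← rpow_mul hx.le, ← rpow_natCast, rpow_add hx, rpow_add hx]
  ring

theorem stmt_9_general (n : ℕ) (R : ℝ) (m : ℝ) (hm : 1 < m)
    (hmn : (m - 1) * n > 2 * m)
    (u : ℝ → ℝ)
    (hu : ∀ r, u r = Real.sinh r ^ (-(2 / (m - 1))) - Real.sinh R ^ (-(2 / (m - 1)))) :
    (∀ r ∈ Ioo 0 R,
      HasDerivAt (fun s => Real.sinh s ^ (n - 1) * deriv u s)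
        (-(Real.sinh r ^ (n - 1) * ((2 / (m - 1)) * ((n : ℝ) - 2 * m / (m - 1))) *
          ((u r + Real.sinh R ^ (-(2 / (m - 1)))) *
            ((u r + Real.sinh R ^ (-(2 / (m - 1)))) ^ (m - 1)
              + ((m - 1) * n - (m + 1)) / ((m - 1) * n - 2 * m))))) r) ∧
    u R = 0 := by
  have hm1 : m - 1 ≠ 0 := (sub_pos.2 hm).ne'
  have hden : (m - 1) * n - 2 * m ≠ 0 := (sub_pos.2 hmn).ne'
  have hn : 1 ≤ n := by
    by_contra! h
    simp only [Nat.lt_one_iff.1 h, Nat.cast_zero, mul_zero] at hmn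
    linarith
  have hexp : -(2 / (m - 1)) * (m - 1) = -2 := by field_simp
  obtain rfl : u = fun s => sinh s ^ (-(2 / (m - 1))) - sinh R ^ (-(2 / (m - 1))) := funext hu
  refine ⟨fun r hr => ?_, sub_self _⟩
  convert hasDerivAt_sinh_pow_mul_deriv_sinh_rpow_sub (n - 1) (-(2 / (m - 1)))
    (sinh R ^ (-(2 / (m - 1)))) hr.1 using 1
  rw [sub_add_cancel, mul_assoc, mul_left_comm, pow_mul_rpow_mul_rpow_add (sinh_pos_iff.2 hr.1),
    add_assoc _ _ (_ * _), hexp, Nat.cast_sub hn, Nat.cast_one]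
  field_simp
  ring_nf

/-- The explicit singular solution for the power nonlinearity in hyperbolic space:
for `m > 1` with `(m-1)n > 2m` and `λ = (2/(m-1))(n - 2m/(m-1))`, the function
`u(r) = sinh(r)^{-2/(m-1)} - sinh(R)^{-2/(m-1)}` satisfies
`-(sinh^{n-1} u')' = sinh^{n-1} λ (u + sinh(R)^{-2/(m-1)})
  ((u + sinh(R)^{-2/(m-1)})^{m-1} + ((m-1)n-(m+1))/((m-1)n-2m))` on `(0,R)`, and `u(R)=0`. -/
theorem stmt_9 (n : ℕ) (hn : 3 ≤ n) (R : ℝ) (hR : 0 < R) (m : ℝ) (hm : 1 < m)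
    (hmn : (m - 1) * n > 2 * m)
    (u : ℝ → ℝ)
    (hu : ∀ r, u r = Real.sinh r ^ (-(2 / (m - 1))) - Real.sinh R ^ (-(2 / (m - 1)))) :
    (∀ r ∈ Ioo 0 R,
      HasDerivAt (fun s => Real.sinh s ^ (n - 1) * deriv u s)
        (-(Real.sinh r ^ (n - 1) * ((2 / (m - 1)) * ((n : ℝ) - 2 * m / (m - 1))) *
          ((u r + Real.sinh R ^ (-(2 / (m - 1)))) *
            ((u r + Real.sinh R ^ (-(2 / (m - 1)))) ^ (m - 1)
              + ((m - 1) * n - (m + 1)) / ((m - 1) * n - 2 * m))))) r) ∧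
    u R = 0 :=
  stmt_9_general n R m hm hmn u hu
end

section
/- Let n ≥ 3 and let ψ : (0,R) → ℝ be smooth positive with ψ'' = -K ψ and (ψ')² = 1 - K ψ² (i.e., ψ = sin, Id, or sinh with K = 1, 0, -1). Then for every C¹ function ξ with ξ(R) = 0 such that φ := ξ ψ^{n/2 - 1} extends to a C¹ function vanishing at 0 and R, one has ∫₀^R ( ξ'² - ((n-2)²/4) ξ²/ψ² ) ψ^{n-1} dr = ∫₀^R φ'² ψ dr - (n(n-2)/4) K ∫₀^R φ² ψ dr. -/
open Set MeasureTheory Filter Topology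

/-! With `α = n/2 - 1` and `φ = ξ ψ^α` one has `φ' = ψ^α (ξ' + α ξ ψ'/ψ)`, and `(ψ')² = 1 - Kψ²`
turns the Hardy integrand `(ξ'² - α² ξ²/ψ²) ψ^(2α+1)` pointwise into
`φ'² ψ - α(α+1) K φ² ψ - α (φ² ψ')'`. The last term integrates to zero since `φ` vanishes at both
ends while `ψ'` stays bounded: `(ψ')² ≤ 1 + ψ²` (as `K ≥ -1`) makes `arsinh ∘ ψ` 1-Lipschitz,
so `ψ`, `ψ'` and `ψ'' = -Kψ` are bounded on `(0,R)`. -/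

theorem hardy_substitution_identity (K α x x' p p' w : ℝ) (hp : p ≠ 0)
    (hp' : p' ^ 2 = 1 - K * p ^ 2) :
    (x' ^ 2 - α ^ 2 * x ^ 2 / p ^ 2) * (w ^ 2 * p)
      = (x' * w + x * (α * w * p' / p)) ^ 2 * p - α * (α + 1) * K * ((x * w) ^ 2 * p)
        - α * (2 * (x * w) * (x' * w + x * (α * w * p' / p)) * p' + (x * w) ^ 2 * (-K * p)) := by
  field_simp
  linear_combination (α ^ 2 * x ^ 2 * w ^ 2) * hp'

theorem hardy_substitution_integrand_eq {n : ℕ} (hn : 1 ≤ n) {ξ ψ Φ : ℝ → ℝ} {K r : ℝ}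
    (hΦ : Φ =ᶠ[𝓝 r] fun y => ξ y * ψ y ^ ((n : ℝ) / 2 - 1)) (hξ : DifferentiableAt ℝ ξ r)
    (hψ : DifferentiableAt ℝ ψ r) (hψr : 0 < ψ r)
    (hψ' : deriv ψ r ^ 2 = 1 - K * ψ r ^ 2) (hψ'' : deriv (deriv ψ) r = -K * ψ r) :
    (deriv ξ r ^ 2 - ((n : ℝ) - 2) ^ 2 / 4 * ξ r ^ 2 / ψ r ^ 2) * ψ r ^ (n - 1)
      = deriv Φ r ^ 2 * ψ r - (n : ℝ) * ((n : ℝ) - 2) / 4 * K * (Φ r ^ 2 * ψ r)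
        - ((n : ℝ) / 2 - 1)
          * (2 * Φ r * deriv Φ r * deriv ψ r + Φ r ^ 2 * deriv (deriv ψ) r) := by
  set α : ℝ := (n : ℝ) / 2 - 1 with hα
  have hpow : HasDerivAt (fun y => ψ y ^ α) (α * ψ r ^ α * deriv ψ r / ψ r) r := by
    have := (Real.hasDerivAt_rpow_const (p := α) (Or.inl hψr.ne')).comp r hψ.hasDerivAt
    rw [Real.rpow_sub_one hψr.ne'] at this
    exact this.congr_deriv (by ring)
  have hΦ' : deriv Φ r = deriv ξ r * ψ r ^ α + ξ r * (α * ψ r ^ α * deriv ψ r / ψ r) := by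
    rw [hΦ.deriv_eq]
    exact (hξ.hasDerivAt.fun_mul hpow).deriv
  have hw : ψ r ^ (n - 1) = (ψ r ^ α) ^ 2 * ψ r := by
    rw [← Real.rpow_natCast, ← Real.rpow_two, ← Real.rpow_mul hψr.le,
      ← Real.rpow_add_one hψr.ne', Nat.cast_sub hn, hα]
    ring_nf
  rw [hΦ', hΦ.eq_of_nhds, hψ'', hw]
  linear_combination
    hardy_substitution_identity K α (ξ r) (deriv ξ r) (ψ r) (deriv ψ r) (ψ r ^ α) hψr.ne' hψ'

theorem abs_le_sinh_of_deriv_sq_le {f f' : ℝ → ℝ} {s : Set ℝ} (hs : Convex ℝ s)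
    (hf : ∀ x ∈ s, HasDerivAt f (f' x) x) (hf' : ∀ x ∈ s, f' x ^ 2 ≤ 1 + f x ^ 2)
    {x₀ x : ℝ} (hx₀ : x₀ ∈ s) (hx : x ∈ s) :
    |f x| ≤ Real.sinh (|Real.arsinh (f x₀)| + |x - x₀|) := by
  have hderiv : ∀ y ∈ s, HasDerivWithinAt (Real.arsinh ∘ f)
      ((√(1 + f y ^ 2))⁻¹ * f' y) s y := fun y hy =>
    ((Real.hasDerivAt_arsinh (f y)).comp y (hf y hy)).hasDerivWithinAt
  have hbound : ∀ y ∈ s, ‖(√(1 + f y ^ 2))⁻¹ * f' y‖ ≤ 1 := by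
    intro y hy
    have hsqrt : 0 < √(1 + f y ^ 2) := Real.sqrt_pos.2 (by positivity)
    rw [Real.norm_eq_abs, abs_mul, abs_inv, abs_of_pos hsqrt, inv_mul_le_iff₀ hsqrt, mul_one]
    exact Real.abs_le_sqrt (hf' y hy)
  have hlip := hs.norm_image_sub_le_of_norm_hasDerivWithin_le hderiv hbound hx₀ hx
  simp only [Function.comp_apply, Real.norm_eq_abs, one_mul] at hlip
  calc |f x| = Real.sinh |Real.arsinh (f x)| := by rw [← Real.abs_sinh, Real.sinh_arsinh]
    _ ≤ Real.sinh (|Real.arsinh (f x₀)| + |x - x₀|) := by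
      rw [Real.sinh_le_sinh]
      linarith [abs_sub_abs_le_abs_sub (Real.arsinh (f x)) (Real.arsinh (f x₀))]

theorem exists_bound_Ioo_of_deriv_sq_le {ψ : ℝ → ℝ} {a b : ℝ}
    (hψ : DifferentiableOn ℝ ψ (Ioo a b)) (hψ' : ∀ x ∈ Ioo a b, deriv ψ x ^ 2 ≤ 1 + ψ x ^ 2) :
    ∃ M, ∀ x ∈ Ioo a b, |ψ x| ≤ M ∧ |deriv ψ x| ≤ M := by
  rcases (Ioo a b).eq_empty_or_nonempty with hempty | ⟨x₀, hx₀⟩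
  · exact ⟨0, by simp [hempty]⟩
  refine ⟨1 + Real.sinh (|Real.arsinh (ψ x₀)| + (b - a)), fun x hx => ?_⟩
  have hψx : |ψ x| ≤ Real.sinh (|Real.arsinh (ψ x₀)| + (b - a)) := by
    refine (abs_le_sinh_of_deriv_sq_le (convex_Ioo a b) (fun y hy => ?_) hψ' hx₀ hx).trans ?_
    · exact (hψ.differentiableAt (isOpen_Ioo.mem_nhds hy)).hasDerivAt
    · rw [Real.sinh_le_sinh, add_le_add_iff_left, abs_sub_le_iff]
      constructor <;> linarith [hx.1, hx.2, hx₀.1, hx₀.2]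
  have hderiv : |deriv ψ x| ≤ 1 + |ψ x| :=
    abs_le_of_sq_le_sq (by nlinarith [hψ' x hx, sq_abs (ψ x), abs_nonneg (ψ x)]) (by positivity)
  constructor <;> linarith

theorem exists_bound_Ioo_of_deriv_sq_eq {ψ : ℝ → ℝ} {a b K : ℝ} (hK : |K| ≤ 1)
    (hψ : DifferentiableOn ℝ ψ (Ioo a b))
    (hψ' : ∀ x ∈ Ioo a b, deriv ψ x ^ 2 = 1 - K * ψ x ^ 2)
    (hψ'' : ∀ x ∈ Ioo a b, deriv (deriv ψ) x = -K * ψ x) :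
    ∃ M, ∀ x ∈ Ioo a b, |ψ x| ≤ M ∧ |deriv ψ x| ≤ M ∧ |deriv (deriv ψ) x| ≤ M := by
  obtain ⟨M, hM⟩ := exists_bound_Ioo_of_deriv_sq_le hψ fun x hx => by
    nlinarith [hψ' x hx, sq_nonneg (ψ x), abs_le.1 hK]
  refine ⟨M, fun x hx => ⟨(hM x hx).1, (hM x hx).2, ?_⟩⟩
  rw [hψ'' x hx, abs_mul, abs_neg]
  exact (mul_le_of_le_one_left (abs_nonneg _) hK).trans (hM x hx).1

theorem intervalIntegrable_of_continuousOn_Ioo {f : ℝ → ℝ} {a b C : ℝ} (hab : a ≤ b)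
    (hf : ContinuousOn f (Ioo a b)) (hC : ∀ x ∈ Ioo a b, |f x| ≤ C) :
    IntervalIntegrable f volume a b := by
  rw [intervalIntegrable_iff_integrableOn_Ioo_of_le hab]
  refine IntegrableOn.of_bound measure_Ioo_lt_top (hf.aestronglyMeasurable measurableSet_Ioo) C ?_
  exact (ae_restrict_iff' measurableSet_Ioo).2 (ae_of_all _ hC)

theorem intervalIntegrable_sq_mul_of_abs_le {f g : ℝ → ℝ} {a b M N : ℝ} (hab : a ≤ b)
    (hf : ContinuousOn f (Ioo a b)) (hg : ContinuousOn g (Ioo a b))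
    (hfN : ∀ x ∈ Ioo a b, |f x| ≤ N) (hgM : ∀ x ∈ Ioo a b, |g x| ≤ M) :
    IntervalIntegrable (fun x => f x ^ 2 * g x) volume a b := by
  refine intervalIntegrable_of_continuousOn_Ioo hab ((hf.pow 2).mul hg) (C := N ^ 2 * M)
    fun x hx => ?_
  have hN : 0 ≤ N := (abs_nonneg _).trans (hfN x hx)
  rw [abs_mul, abs_pow]
  exact mul_le_mul (pow_le_pow_left₀ (abs_nonneg _) (hfN x hx) 2) (hgM x hx) (abs_nonneg _)
    (by positivity)

theorem ContDiffOn.exists_bound_Ioo {Φ : ℝ → ℝ} {a b : ℝ} (hab : a < b)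
    (hΦ : ContDiffOn ℝ 1 Φ (Icc a b)) : ∃ M, ∀ x ∈ Ioo a b, |Φ x| ≤ M ∧ |deriv Φ x| ≤ M := by
  obtain ⟨M₀, hM₀⟩ := isCompact_Icc.exists_bound_of_continuousOn hΦ.continuousOn
  obtain ⟨M₁, hM₁⟩ := isCompact_Icc.exists_bound_of_continuousOn
    (hΦ.continuousOn_derivWithin (uniqueDiffOn_Icc hab) le_rfl)
  refine ⟨max M₀ M₁, fun x hx => ⟨(hM₀ x (Ioo_subset_Icc_self hx)).trans (le_max_left _ _), ?_⟩⟩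
  rw [← derivWithin_of_mem_nhds (Icc_mem_nhds hx.1 hx.2)]
  exact (hM₁ x (Ioo_subset_Icc_self hx)).trans (le_max_right _ _)

section BoundaryTerm

variable {Φ ψ : ℝ → ℝ} {a b M : ℝ}

theorem intervalIntegrable_deriv_sq_mul_deriv (hab : a < b) (hΦ : ContDiffOn ℝ 1 Φ (Icc a b))
    (hψ : ContDiffOn ℝ 2 ψ (Ioo a b))
    (hM : ∀ x ∈ Ioo a b, |deriv ψ x| ≤ M ∧ |deriv (deriv ψ) x| ≤ M) :
    IntervalIntegrable
      (fun x => 2 * Φ x * deriv Φ x * deriv ψ x + Φ x ^ 2 * deriv (deriv ψ) x) volume a b := by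
  obtain ⟨N, hN⟩ := hΦ.exists_bound_Ioo hab
  have hΦo : ContDiffOn ℝ 1 Φ (Ioo a b) := hΦ.mono Ioo_subset_Icc_self
  have hψ₁ : ContDiffOn ℝ 1 (deriv ψ) (Ioo a b) := hψ.deriv_of_isOpen isOpen_Ioo le_rfl
  have hcont : ContinuousOn
      (fun x => 2 * Φ x * deriv Φ x * deriv ψ x + Φ x ^ 2 * deriv (deriv ψ) x) (Ioo a b) := by
    have := hΦo.continuousOn_deriv_of_isOpen isOpen_Ioo le_rfl
    have := hψ₁.continuousOn_deriv_of_isOpen isOpen_Ioo le_rfl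
    have := hψ₁.continuousOn
    have := hΦo.continuousOn
    fun_prop
  refine intervalIntegrable_of_continuousOn_Ioo hab.le hcont (C := 2 * N * N * M + N ^ 2 * M)
    fun x hx => ?_
  obtain ⟨hΦx, hΦ'x⟩ := hN x hx
  obtain ⟨hψ'x, hψ''x⟩ := hM x hx
  have hN0 : 0 ≤ N := (abs_nonneg _).trans hΦx
  refine (abs_add_le _ _).trans (add_le_add ?_ ?_)
  · rw [abs_mul, abs_mul, abs_mul, abs_two]
    gcongr
  · rw [abs_mul, abs_pow]
    gcongr

theorem integral_deriv_sq_mul_deriv_eq_zero (hab : a < b) (hΦ : ContDiffOn ℝ 1 Φ (Icc a b))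
    (ha : Φ a = 0) (hb : Φ b = 0) (hψ : ContDiffOn ℝ 2 ψ (Ioo a b))
    (hM : ∀ x ∈ Ioo a b, |deriv ψ x| ≤ M ∧ |deriv (deriv ψ) x| ≤ M) :
    ∫ x in a..b, (2 * Φ x * deriv Φ x * deriv ψ x + Φ x ^ 2 * deriv (deriv ψ) x) = 0 := by
  have hderiv : ∀ x ∈ Ioo a b, HasDerivAt (fun x => Φ x ^ 2 * deriv ψ x)
      (2 * Φ x * deriv Φ x * deriv ψ x + Φ x ^ 2 * deriv (deriv ψ) x) x := by
    intro x hx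
    have hΦx := (hΦ.differentiableOn one_ne_zero x (Ioo_subset_Icc_self hx)).differentiableAt
      (Icc_mem_nhds hx.1 hx.2)
    have hψx := ((hψ.deriv_of_isOpen isOpen_Ioo le_rfl).differentiableOn one_ne_zero x
      hx).differentiableAt (isOpen_Ioo.mem_nhds hx)
    refine ((hΦx.hasDerivAt.fun_pow 2).fun_mul hψx.hasDerivAt).congr_deriv ?_
    norm_num
  have hlim : ∀ l : Filter ℝ, Ioo a b ∈ l → Tendsto Φ l (𝓝 0) →
      Tendsto (fun x => Φ x ^ 2 * deriv ψ x) l (𝓝 0) := fun l hl hΦl => by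
    have hΦ2 : Tendsto (fun x => Φ x ^ 2) l (𝓝 0) := by simpa using hΦl.pow 2
    exact hΦ2.zero_mul_isBoundedUnder_le
      ⟨M, eventually_map.2 (mem_of_superset hl fun x hx => (hM x hx).1)⟩
  have hΦa : Tendsto Φ (𝓝[>] a) (𝓝 0) :=
    ha ▸ (hΦ.continuousOn a (left_mem_Icc.2 hab.le)).mono_of_mem_nhdsWithin
      (mem_of_superset (Ioo_mem_nhdsGT hab) Ioo_subset_Icc_self)
  have hΦb : Tendsto Φ (𝓝[<] b) (𝓝 0) :=
    hb ▸ (hΦ.continuousOn b (right_mem_Icc.2 hab.le)).mono_of_mem_nhdsWithin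
      (mem_of_superset (Ioo_mem_nhdsLT hab) Ioo_subset_Icc_self)
  simpa using intervalIntegral.integral_eq_sub_of_hasDerivAt_of_tendsto hab hderiv
    (intervalIntegrable_deriv_sq_mul_deriv hab hΦ hψ hM)
    (hlim _ (Ioo_mem_nhdsGT hab) hΦa) (hlim _ (Ioo_mem_nhdsLT hab) hΦb)

end BoundaryTerm

theorem stmt_13_general (n : ℕ) (hn : 3 ≤ n) (R : ℝ) (hR : 0 < R)
    (K : ℝ) (hK : K ∈ ({-1, 0, 1} : Set ℝ))
    (ψ : ℝ → ℝ) (hψC : ContDiffOn ℝ 2 ψ (Ioo 0 R))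
    (hψpos : ∀ r ∈ Ioo 0 R, 0 < ψ r)
    (hψ'' : ∀ r ∈ Ioo 0 R, deriv (deriv ψ) r = -K * ψ r)
    (hψ' : ∀ r ∈ Ioo 0 R, (deriv ψ r) ^ 2 = 1 - K * ψ r ^ 2)
    (ξ : ℝ → ℝ) (hξ : ContDiffOn ℝ 1 ξ (Icc 0 R))
    (Φ : ℝ → ℝ) (hΦ : ContDiffOn ℝ 1 Φ (Icc 0 R))
    (hΦeq : ∀ r ∈ Ioo 0 R, Φ r = ξ r * ψ r ^ ((n : ℝ) / 2 - 1))
    (hΦ0 : Φ 0 = 0) (hΦR : Φ R = 0) :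
    (∫ r in (0:ℝ)..R,
        ((deriv ξ r) ^ 2 - (((n : ℝ) - 2) ^ 2 / 4) * (ξ r) ^ 2 / (ψ r) ^ 2)
          * ψ r ^ (n - 1))
      = (∫ r in (0:ℝ)..R, (deriv Φ r) ^ 2 * ψ r)
        - ((n : ℝ) * ((n : ℝ) - 2) / 4) * K * ∫ r in (0:ℝ)..R, (Φ r) ^ 2 * ψ r := by
  have hKabs : |K| ≤ 1 := by
    rcases hK with rfl | rfl | rfl <;> norm_num
  have hψd : DifferentiableOn ℝ ψ (Ioo 0 R) := hψC.differentiableOn two_ne_zero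
  obtain ⟨M, hM⟩ := exists_bound_Ioo_of_deriv_sq_eq hKabs hψd hψ' hψ''
  obtain ⟨N, hN⟩ := hΦ.exists_bound_Ioo hR
  have hΦo : ContDiffOn ℝ 1 Φ (Ioo 0 R) := hΦ.mono Ioo_subset_Icc_self
  have hA : IntervalIntegrable (fun r => deriv Φ r ^ 2 * ψ r) volume 0 R :=
    intervalIntegrable_sq_mul_of_abs_le hR.le
      (hΦo.continuousOn_deriv_of_isOpen isOpen_Ioo le_rfl) hψC.continuousOn
      (fun r hr => (hN r hr).2) (fun r hr => (hM r hr).1)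
  have hB : IntervalIntegrable (fun r => Φ r ^ 2 * ψ r) volume 0 R :=
    intervalIntegrable_sq_mul_of_abs_le hR.le hΦo.continuousOn hψC.continuousOn
      (fun r hr => (hN r hr).1) (fun r hr => (hM r hr).1)
  have hψM : ∀ r ∈ Ioo 0 R, |deriv ψ r| ≤ M ∧ |deriv (deriv ψ) r| ≤ M := fun r hr => (hM r hr).2
  rw [intervalIntegral.integral_congr_Ioo_of_le hR.le fun r hr =>
      hardy_substitution_integrand_eq (by omega) (eventuallyEq_of_mem (isOpen_Ioo.mem_nhds hr) hΦeq)
        ((hξ.differentiableOn one_ne_zero r (Ioo_subset_Icc_self hr)).differentiableAt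
          (Icc_mem_nhds hr.1 hr.2))
        (hψd.differentiableAt (isOpen_Ioo.mem_nhds hr)) (hψpos r hr) (hψ' r hr) (hψ'' r hr),
    intervalIntegral.integral_sub (hA.sub (hB.const_mul _))
      ((intervalIntegrable_deriv_sq_mul_deriv hR hΦ hψC hψM).const_mul _),
    intervalIntegral.integral_sub hA (hB.const_mul _), intervalIntegral.integral_const_mul,
    intervalIntegral.integral_const_mul,
    integral_deriv_sq_mul_deriv_eq_zero hR hΦ hΦ0 hΦR hψC hψM]
  ring

/-- The space-form substitution identity: if `ψ'' = -Kψ` and `(ψ')² = 1 - Kψ²` on `(0,R)`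
(so `ψ = sin`, `Id`, or `sinh` with `K = 1, 0, -1`), `ξ` is `C¹` on `[0,R]` with `ξ(R)=0`,
and `Φ` is a `C¹` extension of `φ = ξ ψ^{n/2-1}` vanishing at `0` and `R`, then
`∫₀^R (ξ'² - ((n-2)²/4) ξ²/ψ²) ψ^{n-1} = ∫₀^R Φ'² ψ - (n(n-2)/4) K ∫₀^R Φ² ψ`. -/
theorem stmt_13 (n : ℕ) (hn : 3 ≤ n) (R : ℝ) (hR : 0 < R)
    (K : ℝ) (hK : K ∈ ({-1, 0, 1} : Set ℝ))
    (ψ : ℝ → ℝ) (hψC : ContDiffOn ℝ 2 ψ (Ioo 0 R))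
    (hψpos : ∀ r ∈ Ioo 0 R, 0 < ψ r)
    (hψ'' : ∀ r ∈ Ioo 0 R, deriv (deriv ψ) r = -K * ψ r)
    (hψ' : ∀ r ∈ Ioo 0 R, (deriv ψ r) ^ 2 = 1 - K * ψ r ^ 2)
    (ξ : ℝ → ℝ) (hξ : ContDiffOn ℝ 1 ξ (Icc 0 R)) (hξR : ξ R = 0)
    (Φ : ℝ → ℝ) (hΦ : ContDiffOn ℝ 1 Φ (Icc 0 R))
    (hΦeq : ∀ r ∈ Ioo 0 R, Φ r = ξ r * ψ r ^ ((n : ℝ) / 2 - 1))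
    (hΦ0 : Φ 0 = 0) (hΦR : Φ R = 0) :
    (∫ r in (0:ℝ)..R,
        ((deriv ξ r) ^ 2 - (((n : ℝ) - 2) ^ 2 / 4) * (ξ r) ^ 2 / (ψ r) ^ 2)
          * ψ r ^ (n - 1))
      = (∫ r in (0:ℝ)..R, (deriv Φ r) ^ 2 * ψ r)
        - ((n : ℝ) * ((n : ℝ) - 2) / 4) * K * ∫ r in (0:ℝ)..R, (Φ r) ^ 2 * ψ r :=
  stmt_13_general n hn R hR K hK ψ hψC hψpos hψ'' hψ' ξ hξ Φ hΦ hΦeq hΦ0 hΦR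
end
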